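/- Let p ∈ ℝ and let ρ_W(p) be the noisy W state on three qubits. Let H denote the entrywise (Hadamard) square of ρ_W(p), i.e., H(x,y) = ρ_W(p)(x,y)² for all index triples x, y. Then H = (p²/3)·|W⟩⟨W| + ((1−p)²/64)·I₈ + (p(1−p)/12)·(|001⟩⟨001| + |010⟩⟨010| + |100⟩⟨100|), and tr(H) = (5p² + 3)/24. Consequently the distilled noisy W state ρ'_W(p) := H/tr(H) equals (8p²/(5p²+3))·|W⟩⟨W| + (3(1−p)²/(8(5p²+3)))·I₈ + (2p(1−p)/(5p²+3))·(|001⟩⟨001| + |010⟩⟨010| + |100⟩⟨100|). -/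

import Mathlib

open Matrix BigOperators

noncomputable section

/-- The rank-one matrix `x x†`. -/
def rankOne {n : Type*} (x : n → ℂ) : Matrix n n ℂ :=
  Matrix.of fun i j => x i * (starRingEnd ℂ) (x j)

/-- The W vector `(|001⟩ + |010⟩ + |100⟩)/√3`. -/
def Wvec : (Fin 2 × Fin 2 × Fin 2) → ℂ := fun x =>
  ((if x = (0, 0, 1) then 1 else 0) + (if x = (0, 1, 0) then 1 else 0)
    + (if x = (1, 0, 0) then 1 else 0)) / (Real.sqrt 3 : ℂ)

/-- The noisy W state `p |W⟩⟨W| + (1-p)/8 · I₈`. -/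
def rhoW (p : ℝ) :
    Matrix (Fin 2 × Fin 2 × Fin 2) (Fin 2 × Fin 2 × Fin 2) ℂ :=
  (p : ℂ) • rankOne Wvec + (((1 - p) / 8 : ℝ) : ℂ) • 1

/-- The standard basis vector `|ijk⟩` of ℂ⁸. -/
def basis3 (t : Fin 2 × Fin 2 × Fin 2) : (Fin 2 × Fin 2 × Fin 2) → ℂ :=
  fun x => if x = t then 1 else 0

/-!
Squaring `ρ = p A + q I` entrywise gives `p² (A ⊙ A) + 2pq diag(A) + q² I`, since the Hadamard
product is bilinear and `1 ⊙ A` is the diagonal of `A`. For `A = |W⟩⟨W|`, `A ⊙ A` is the rank-one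
matrix of the entrywise square of `W`, which is `W / √3` because every entry of `W` is `0` or
`1 / √3`; for the same reason `diag A` is a third of the projector onto
`span {|001⟩, |010⟩, |100⟩}`. The trace and the normalized state then follow by scalar arithmetic.
-/

section rankOne

variable {n : Type*}

theorem rankOne_hadamard_rankOne (x y : n → ℂ) :
    rankOne x ⊙ rankOne y = rankOne (x * y) := by
  ext i j
  simp only [rankOne, hadamard_apply, of_apply, Pi.mul_apply, map_mul]
  ring

theorem rankOne_ofReal_smul (c : ℝ) (x : n → ℂ) :
    rankOne ((c : ℂ) • x) = ((c ^ 2 : ℝ) : ℂ) • rankOne x := by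
  ext i j
  simp only [rankOne, of_apply, Matrix.smul_apply, Pi.smul_apply, smul_eq_mul, map_mul,
    Complex.conj_ofReal]
  push_cast
  ring

theorem diag_rankOne (x : n → ℂ) : (rankOne x).diag = x * star x := rfl

end rankOne

theorem of_sq_eq_hadamard_self {m n α : Type*} [Monoid α] (A : Matrix m n α) :
    (of fun i j => A i j ^ 2) = A ⊙ A := by
  simp only [sq]
  rfl

theorem hadamard_self_smul_add_smul_one {n α : Type*} [DecidableEq n] [CommSemiring α]
    (A : Matrix n n α) (a b : α) :
    (a • A + b • 1) ⊙ (a • A + b • 1)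
      = a ^ 2 • (A ⊙ A) + (2 * a * b) • diagonal A.diag + b ^ 2 • 1 := by
  simp only [add_hadamard, hadamard_add, smul_hadamard, hadamard_smul]
  simp only [one_hadamard, hadamard_one, diag_one]
  module

theorem rankOne_basis3 (t : Fin 2 × Fin 2 × Fin 2) :
    rankOne (basis3 t) = diagonal (basis3 t) := by
  ext i j
  simp only [rankOne, basis3, diagonal_apply, of_apply]
  split_ifs <;> simp_all

theorem trace_rankOne_basis3 (t : Fin 2 × Fin 2 × Fin 2) : (rankOne (basis3 t)).trace = 1 := by
  simp [rankOne_basis3, basis3]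

def wIndicator : (Fin 2 × Fin 2 × Fin 2) → ℂ :=
  basis3 (0, 0, 1) + basis3 (0, 1, 0) + basis3 (1, 0, 0)

theorem Wvec_eq_smul_wIndicator : Wvec = (((√3)⁻¹ : ℝ) : ℂ) • wIndicator := by
  ext x
  simp [Wvec, wIndicator, basis3, div_eq_inv_mul]

theorem wIndicator_mul_self : wIndicator * wIndicator = wIndicator := by
  ext x
  fin_cases x <;> simp [wIndicator, basis3]

theorem star_wIndicator : star wIndicator = wIndicator := by
  ext x
  fin_cases x <;> simp [wIndicator, basis3]

theorem star_Wvec : star Wvec = Wvec := by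
  rw [Wvec_eq_smul_wIndicator, star_smul, star_wIndicator, Complex.star_def, Complex.conj_ofReal]

theorem Wvec_mul_self : Wvec * Wvec = (((√3)⁻¹ : ℝ) : ℂ) • Wvec := by
  conv_lhs => rw [Wvec_eq_smul_wIndicator, smul_mul_smul_comm, wIndicator_mul_self, mul_smul,
    ← Wvec_eq_smul_wIndicator]

theorem rankOne_Wvec_hadamard_self : rankOne Wvec ⊙ rankOne Wvec = (1 / 3 : ℂ) • rankOne Wvec := by
  rw [rankOne_hadamard_rankOne, Wvec_mul_self, rankOne_ofReal_smul]
  norm_num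

theorem diagonal_diag_rankOne_Wvec :
    diagonal (rankOne Wvec).diag = (1 / 3 : ℂ) •
      (rankOne (basis3 (0, 0, 1)) + rankOne (basis3 (0, 1, 0)) + rankOne (basis3 (1, 0, 0))) := by
  rw [diag_rankOne, star_Wvec, Wvec_mul_self, Wvec_eq_smul_wIndicator, smul_smul,
    rankOne_basis3, rankOne_basis3, rankOne_basis3, wIndicator, diagonal_smul]
  simp only [Pi.add_def, diagonal_add]
  congr 1
  rw [← Complex.ofReal_mul, ← mul_inv, Real.mul_self_sqrt zero_le_three]
  norm_num

theorem trace_rankOne_Wvec : (rankOne Wvec).trace = 1 := by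
  rw [show (rankOne Wvec).trace = (diagonal (rankOne Wvec).diag).trace from (trace_diagonal _).symm,
    diagonal_diag_rankOne_Wvec]
  simp only [trace_smul, trace_add, trace_rankOne_basis3, smul_eq_mul]
  norm_num

theorem hadamard_self_rhoW (p : ℝ) :
    rhoW p ⊙ rhoW p = ((p ^ 2 / 3 : ℝ) : ℂ) • rankOne Wvec
        + ((((1 - p) ^ 2) / 64 : ℝ) : ℂ) • 1
        + ((p * (1 - p) / 12 : ℝ) : ℂ) •
          (rankOne (basis3 (0, 0, 1)) + rankOne (basis3 (0, 1, 0)) + rankOne (basis3 (1, 0, 0))) := by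
  rw [rhoW, hadamard_self_smul_add_smul_one, rankOne_Wvec_hadamard_self, diagonal_diag_rankOne_Wvec]
  push_cast
  module

/-- The entrywise (Hadamard) square of the noisy W state equals
`(p²/3)|W⟩⟨W| + ((1-p)²/64) I₈ + (p(1-p)/12)(|001⟩⟨001| + |010⟩⟨010| + |100⟩⟨100|)`,
with trace `(5p²+3)/24`; consequently the distilled noisy W state `H / tr H` equals
`(8p²/(5p²+3))|W⟩⟨W| + (3(1-p)²/(8(5p²+3))) I₈
  + (2p(1-p)/(5p²+3))(|001⟩⟨001| + |010⟩⟨010| + |100⟩⟨100|)`. -/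
theorem hadamard_square_noisy_w (p : ℝ)
    (H : Matrix (Fin 2 × Fin 2 × Fin 2) (Fin 2 × Fin 2 × Fin 2) ℂ)
    (hH : H = Matrix.of fun x y => (rhoW p x y) ^ 2) :
    H = ((p ^ 2 / 3 : ℝ) : ℂ) • rankOne Wvec
        + ((((1 - p) ^ 2) / 64 : ℝ) : ℂ) • 1
        + ((p * (1 - p) / 12 : ℝ) : ℂ) •
          (rankOne (basis3 (0, 0, 1)) + rankOne (basis3 (0, 1, 0)) + rankOne (basis3 (1, 0, 0))) ∧
    H.trace = (((5 * p ^ 2 + 3) / 24 : ℝ) : ℂ) ∧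
    (H.trace)⁻¹ • H =
      ((8 * p ^ 2 / (5 * p ^ 2 + 3) : ℝ) : ℂ) • rankOne Wvec
        + ((3 * (1 - p) ^ 2 / (8 * (5 * p ^ 2 + 3)) : ℝ) : ℂ) • 1
        + ((2 * p * (1 - p) / (5 * p ^ 2 + 3) : ℝ) : ℂ) •
          (rankOne (basis3 (0, 0, 1)) + rankOne (basis3 (0, 1, 0)) + rankOne (basis3 (1, 0, 0))) := by
  have hH' := hH.trans ((of_sq_eq_hadamard_self _).trans (hadamard_self_rhoW p))
  have htrace : H.trace = (((5 * p ^ 2 + 3) / 24 : ℝ) : ℂ) := by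
    simp only [hH', trace_add, trace_smul, trace_rankOne_Wvec, trace_rankOne_basis3, trace_one,
      Fintype.card_prod, Fintype.card_fin, smul_eq_mul]
    push_cast
    ring
  refine ⟨hH', htrace, ?_⟩
  have hpos : 5 * p ^ 2 + 3 ≠ 0 := by positivity
  have hW : ((5 * p ^ 2 + 3) / 24)⁻¹ * (p ^ 2 / 3) = 8 * p ^ 2 / (5 * p ^ 2 + 3) := by
    field_simp; ring
  have hI : ((5 * p ^ 2 + 3) / 24)⁻¹ * ((1 - p) ^ 2 / 64)
      = 3 * (1 - p) ^ 2 / (8 * (5 * p ^ 2 + 3)) := by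
    field_simp; ring
  have hS : ((5 * p ^ 2 + 3) / 24)⁻¹ * (p * (1 - p) / 12) = 2 * p * (1 - p) / (5 * p ^ 2 + 3) := by
    field_simp; ring
  rw [htrace, hH', smul_add, smul_add, smul_smul, smul_smul, smul_smul, ← Complex.ofReal_inv]
  simp only [← Complex.ofReal_mul, hW, hI, hS]
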